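/- Let r ≥ 1 be an integer and let k_1 ≥ 0 and c ≥ 0 be real numbers. For x ∈ ℝ^r with 0 < x_r < x_{r−1} < … < x_1, define b_i(x) = c·coth(x_i) + (k_1/2)·∑_{j ≠ i} (coth(x_i − x_j) + coth(x_i + x_j)). Then for all x, y ∈ ℝ^r with 0 < x_r < … < x_1 and 0 < y_r < … < y_1, one has ∑_{i=1}^r (x_i − y_i)·(b_i(x) − b_i(y)) ≤ 0. -/

import Mathlib

/-- `coth x = cosh x / sinh x`. -/
noncomputable def coth (x : ℝ) : ℝ := Real.cosh x / Real.sinh x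

lemma coth_neg' (a : ℝ) : coth (-a) = - coth a := by
  unfold coth; rw [Real.sinh_neg, Real.cosh_neg, div_neg]

lemma coth_key_pos {a b : ℝ} (ha : 0 < a) (hb : 0 < b) :
    (a - b) * (coth a - coth b) ≤ 0 := by
  have hsa : 0 < Real.sinh a := Real.sinh_pos_iff.2 ha
  have hsb : 0 < Real.sinh b := Real.sinh_pos_iff.2 hb
  have h : coth a - coth b = Real.sinh (b - a) / (Real.sinh a * Real.sinh b) := by
    unfold coth; rw [Real.sinh_sub]; field_simp
  rw [h, ← mul_div_assoc]
  apply div_nonpos_of_nonpos_of_nonneg _ (le_of_lt (mul_pos hsa hsb))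
  have key : 0 ≤ (b - a) * Real.sinh (b - a) := by
    rcases le_total 0 (b - a) with ht | ht
    · exact mul_nonneg ht (Real.sinh_nonneg_iff.2 ht)
    · have hs : Real.sinh (b - a) ≤ 0 := by
        rw [show b - a = -(a - b) by ring, Real.sinh_neg, neg_nonpos]
        exact Real.sinh_nonneg_iff.2 (by linarith)
      nlinarith [mul_nonneg (neg_nonneg.2 ht) (neg_nonneg.2 hs)]
  nlinarith [key]

lemma coth_key_neg {a b : ℝ} (ha : a < 0) (hb : b < 0) :
    (a - b) * (coth a - coth b) ≤ 0 := by
  have h := coth_key_pos (a := -a) (b := -b) (by linarith) (by linarith)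
  rw [coth_neg', coth_neg'] at h
  nlinarith [h]

lemma coth_key_same {a b : ℝ} (h : (0 < a ∧ 0 < b) ∨ (a < 0 ∧ b < 0)) :
    (a - b) * (coth a - coth b) ≤ 0 := by
  rcases h with ⟨h1, h2⟩ | ⟨h1, h2⟩
  · exact coth_key_pos h1 h2
  · exact coth_key_neg h1 h2

lemma pair_le {xi xj yi yj : ℝ} (hxi : 0 < xi) (hxj : 0 < xj) (hyi : 0 < yi) (hyj : 0 < yj)
    (hsign : (xj < xi ∧ yj < yi) ∨ (xi < xj ∧ yi < yj)) :
    (xi - yi) * ((coth (xi - xj) + coth (xi + xj)) - (coth (yi - yj) + coth (yi + yj)))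
      + (xj - yj) * ((coth (xj - xi) + coth (xj + xi)) - (coth (yj - yi) + coth (yj + yi))) ≤ 0 := by
  have e1 : coth (xj - xi) = -coth (xi - xj) := by rw [← neg_sub, coth_neg']
  have e2 : coth (yj - yi) = -coth (yi - yj) := by rw [← neg_sub, coth_neg']
  have e3 : coth (xj + xi) = coth (xi + xj) := by rw [add_comm]
  have e4 : coth (yj + yi) = coth (yi + yj) := by rw [add_comm]
  have heq : (xi - yi) * ((coth (xi - xj) + coth (xi + xj)) - (coth (yi - yj) + coth (yi + yj)))
      + (xj - yj) * ((coth (xj - xi) + coth (xj + xi)) - (coth (yj - yi) + coth (yj + yi)))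
      = ((xi - xj) - (yi - yj)) * (coth (xi - xj) - coth (yi - yj))
        + ((xi + xj) - (yi + yj)) * (coth (xi + xj) - coth (yi + yj)) := by
    rw [e1, e2, e3, e4]; ring
  rw [heq]
  have h1 : ((xi - xj) - (yi - yj)) * (coth (xi - xj) - coth (yi - yj)) ≤ 0 := by
    apply coth_key_same
    rcases hsign with ⟨h1, h2⟩ | ⟨h1, h2⟩
    · left; constructor <;> linarith
    · right; constructor <;> linarith
  have h2 : ((xi + xj) - (yi + yj)) * (coth (xi + xj) - coth (yi + yj)) ≤ 0 :=
    coth_key_same (Or.inl ⟨by linarith, by linarith⟩)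
  linarith

theorem heckman_opdam_drift_dissipative (r : ℕ) (hr : 1 ≤ r)
    (k1 c : ℝ) (hk1 : 0 ≤ k1) (hc : 0 ≤ c)
    (x y : Fin r → ℝ)
    (hx : ∀ i, 0 < x i) (hx' : ∀ i j : Fin r, i < j → x j < x i)
    (hy : ∀ i, 0 < y i) (hy' : ∀ i j : Fin r, i < j → y j < y i) :
    ∑ i : Fin r, (x i - y i) *
      ((c * coth (x i) + k1 / 2 * ∑ j ∈ Finset.univ.filter (fun j => j ≠ i),
          (coth (x i - x j) + coth (x i + x j)))
        - (c * coth (y i) + k1 / 2 * ∑ j ∈ Finset.univ.filter (fun j => j ≠ i),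
          (coth (y i - y j) + coth (y i + y j)))) ≤ 0 := by
  set F : Fin r → Fin r → ℝ := fun i j =>
    (x i - y i) * ((coth (x i - x j) + coth (x i + x j)) - (coth (y i - y j) + coth (y i + y j)))
    with hF
  have hsum : ∑ i : Fin r, (x i - y i) *
      ((c * coth (x i) + k1 / 2 * ∑ j ∈ Finset.univ.filter (fun j => j ≠ i),
          (coth (x i - x j) + coth (x i + x j)))
        - (c * coth (y i) + k1 / 2 * ∑ j ∈ Finset.univ.filter (fun j => j ≠ i),
          (coth (y i - y j) + coth (y i + y j))))
      = c * (∑ i : Fin r, (x i - y i) * (coth (x i) - coth (y i)))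
        + k1 / 2 * ∑ i : Fin r, ∑ j ∈ Finset.univ.filter (fun j => j ≠ i), F i j := by
    rw [Finset.mul_sum, Finset.mul_sum, ← Finset.sum_add_distrib]
    apply Finset.sum_congr rfl
    intro i _
    have hinner : ∑ j ∈ Finset.univ.filter (fun j => j ≠ i), F i j
        = (x i - y i) * ((∑ j ∈ Finset.univ.filter (fun j => j ≠ i),
            (coth (x i - x j) + coth (x i + x j)))
          - (∑ j ∈ Finset.univ.filter (fun j => j ≠ i),
            (coth (y i - y j) + coth (y i + y j)))) := by
      rw [← Finset.sum_sub_distrib, Finset.mul_sum]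
    rw [hinner]; ring
  rw [hsum]
  have part1 : ∑ i : Fin r, (x i - y i) * (coth (x i) - coth (y i)) ≤ 0 := by
    apply Finset.sum_nonpos
    intro i _
    exact coth_key_pos (hx i) (hy i)
  have part2 : ∑ i : Fin r, ∑ j ∈ Finset.univ.filter (fun j => j ≠ i), F i j ≤ 0 := by
    have hswap : ∑ i : Fin r, ∑ j ∈ Finset.univ.filter (fun j => j ≠ i), F j i
        = ∑ i : Fin r, ∑ j ∈ Finset.univ.filter (fun j => j ≠ i), F i j := by
      apply Finset.sum_comm'
      intro a b
      simp [ne_comm]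
    have hpair : ∑ i : Fin r, ∑ j ∈ Finset.univ.filter (fun j => j ≠ i), (F i j + F j i) ≤ 0 := by
      apply Finset.sum_nonpos
      intro i _
      apply Finset.sum_nonpos
      intro j hj
      simp only [Finset.mem_filter] at hj
      have hij : j ≠ i := hj.2
      rcases lt_or_gt_of_ne (Ne.symm hij) with h | h
      · -- i < j, so x j < x i
        exact pair_le (hx i) (hx j) (hy i) (hy j) (Or.inl ⟨hx' i j h, hy' i j h⟩)
      · exact pair_le (hx i) (hx j) (hy i) (hy j) (Or.inr ⟨hx' j i h, hy' j i h⟩)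
    have hdist : ∑ i : Fin r, ∑ j ∈ Finset.univ.filter (fun j => j ≠ i), (F i j + F j i)
        = (∑ i : Fin r, ∑ j ∈ Finset.univ.filter (fun j => j ≠ i), F i j)
          + ∑ i : Fin r, ∑ j ∈ Finset.univ.filter (fun j => j ≠ i), F j i := by
      simp [Finset.sum_add_distrib]
    rw [hdist, hswap] at hpair
    linarith
  have := mul_nonpos_of_nonneg_of_nonpos hc part1
  have := mul_nonpos_of_nonneg_of_nonpos (by linarith : (0:ℝ) ≤ k1 / 2) part2
  linarith
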